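/- Let ℓ_i = λ_i + θ(N-i) for a partition λ₁ ≥ … ≥ λ_N ≥ 0 and parameter θ. Define eig_m(λ) = ∑_{k=1}^{N} (-θ)^{k-1} h^{(k)}_{m+1-k}(ℓ₁,…,ℓ_N), where h^{(k)}_m(x) = ∑_{k-element subsets S ⊆ {1,…,N}} h_m(x_S) is the sum of complete homogeneous symmetric polynomials of degree m over all k-element subsets of variables (with h_m = 0 for m < 0). Then in the ring of formal power series over ℚ(θ): 1 - θz ∑_{m=0}^∞ eig_m(λ) z^m = ∏_{i=1}^N (1 - (ℓ_i + θ)z)/(1 - ℓ_i z). -/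

import Mathlib

open PowerSeries

/-- `h_d` (complete homogeneous, degree `d`, `= 0` for `d < 0`) in the variables
`x i` for `i` in the finset `s`. -/
noncomputable def hSubset {N : ℕ} (x : Fin N → ℝ) (s : Finset (Fin N)) (d : ℤ) : ℝ :=
  if h : 0 ≤ d then ∑ μ ∈ s.sym d.toNat, (Multiset.map x μ.1).prod else 0

/-- `h^{(k)}_d(x) = ∑_{k-element subsets S} h_d(x_S)`. -/
noncomputable def hSym {N : ℕ} (x : Fin N → ℝ) (k : ℕ) (d : ℤ) : ℝ :=
  ∑ s ∈ Finset.univ.powersetCard k, hSubset x s d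

/-!
Writing `1 - (ℓ + θ) z = (1 - ℓ z) - θ z`, each factor of the product is `1 - θ z / (1 - ℓ_i z)`.
Expanding the product over subsets `S` gives `∑_S (-θ z)^{|S|} ∏_{i ∈ S} (1 - ℓ_i z)⁻¹`, and
`∏_{i ∈ S} (1 - ℓ_i z)⁻¹ = ∑_m h_m(ℓ_S) z^m`. Grouping by `k = |S|`, the term `k = 0` is `1` and
the others are exactly `-θ z ∑_m (-θ)^{k-1} h^{(k)}_{m+1-k}(ℓ) z^m`.
-/

open Finset

section CompleteHomogeneous

variable {ι : Type*} [DecidableEq ι]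

theorem filter_mem_sym_succ_eq_image_cons {t : Finset ι} {i : ι} (hi : i ∈ t) (n : ℕ) :
    (t.sym (n + 1)).filter (i ∈ ·) = (t.sym n).image (Sym.cons i) := by
  ext μ
  simp only [mem_filter, mem_image, mem_sym_iff]
  constructor
  · rintro ⟨hμ, hiμ⟩
    exact ⟨μ.erase i hiμ, fun a ha => hμ a (Multiset.mem_of_mem_erase ha), Sym.cons_erase hiμ⟩
  · rintro ⟨ν, hν, rfl⟩
    exact ⟨fun a ha => (Sym.mem_cons.1 ha).elim (· ▸ hi) (hν a), Sym.mem_cons_self i ν⟩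

theorem filter_notMem_sym_insert {s : Finset ι} {i : ι} (hi : i ∉ s) (n : ℕ) :
    ((insert i s).sym n).filter (i ∉ ·) = s.sym n := by
  ext μ
  simp only [mem_filter, mem_sym_iff, mem_insert]
  exact ⟨fun ⟨hμ, hiμ⟩ a ha => (hμ a ha).resolve_left fun hai => hiμ (hai ▸ ha),
    fun hμ => ⟨fun a ha => Or.inr (hμ a ha), fun hiμ => hi (hμ i hiμ)⟩⟩

variable {R : Type*} [CommRing R] (x : ι → R)

noncomputable def completeHomogeneous (s : Finset ι) (n : ℕ) : R :=
  ∑ μ ∈ s.sym n, ((μ : Multiset ι).map x).prod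

@[simp]
theorem completeHomogeneous_zero (s : Finset ι) : completeHomogeneous x s 0 = 1 := by
  simp [completeHomogeneous, Sym.eq_nil_of_card_zero]

@[simp]
theorem completeHomogeneous_empty_succ (n : ℕ) : completeHomogeneous x ∅ (n + 1) = 0 := by
  rw [completeHomogeneous, sym_empty, sum_empty]

theorem completeHomogeneous_insert_succ {s : Finset ι} {i : ι} (hi : i ∉ s) (n : ℕ) :
    completeHomogeneous x (insert i s) (n + 1) =
      x i * completeHomogeneous x (insert i s) n + completeHomogeneous x s (n + 1) := by
  rw [completeHomogeneous, ← sum_filter_add_sum_filter_not _ (i ∈ ·),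
    filter_mem_sym_succ_eq_image_cons (mem_insert_self i s), filter_notMem_sym_insert hi,
    sum_image fun _ _ _ _ h => (Sym.cons_inj_right i _ _).1 h, completeHomogeneous, mul_sum]
  simp only [Sym.coe_cons, Multiset.map_cons, Multiset.prod_cons]
  rfl

theorem mk_completeHomogeneous_empty : PowerSeries.mk (completeHomogeneous x ∅) = 1 := by
  ext (_ | n) <;> simp [coeff_one]

theorem one_sub_C_mul_X_mul_mk_completeHomogeneous_insert {s : Finset ι} {i : ι} (hi : i ∉ s) :
    (1 - C (x i) * X) * PowerSeries.mk (completeHomogeneous x (insert i s)) =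
      PowerSeries.mk (completeHomogeneous x s) := by
  ext (_ | n)
  · simp
  · rw [sub_mul, one_mul, mul_assoc, map_sub, coeff_C_mul, coeff_succ_X_mul, coeff_mk, coeff_mk,
      coeff_mk, completeHomogeneous_insert_succ x hi]
    ring

end CompleteHomogeneous

theorem prod_inv_one_sub_C_mul_X {ι k : Type*} [DecidableEq ι] [Field k] (x : ι → k)
    (s : Finset ι) :
    ∏ i ∈ s, (1 - C (x i) * X)⁻¹ = PowerSeries.mk (completeHomogeneous x s) := by
  induction s using Finset.induction_on with
  | empty => exact (mk_completeHomogeneous_empty x).symm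
  | insert i s hi ih =>
    rw [prod_insert hi, ih, ← one_sub_C_mul_X_mul_mk_completeHomogeneous_insert x hi,
      ← mul_assoc, PowerSeries.inv_mul_cancel _ (by simp), one_mul]

theorem prod_one_sub_C_add_mul_X_mul_inv {ι k : Type*} [Field k] (x : ι → k) (θ : k)
    (s : Finset ι) :
    ∏ i ∈ s, (1 - C (x i + θ) * X) * (1 - C (x i) * X)⁻¹ =
      ∑ t ∈ s.powerset, (-(C θ * X)) ^ #t * ∏ i ∈ t, (1 - C (x i) * X)⁻¹ := by
  have factor : ∀ i ∈ s, (1 - C (x i + θ) * X) * (1 - C (x i) * X)⁻¹ =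
      1 + -(C θ * X) * (1 - C (x i) * X)⁻¹ := fun i _ => by
    rw [map_add, show 1 - (C (x i) + C θ) * X = (1 - C (x i) * X) + -(C θ * X) by ring, add_mul,
      PowerSeries.mul_inv_cancel _ (by simp)]
  rw [prod_congr rfl factor, prod_one_add]
  simp_rw [prod_mul_distrib, prod_const]

theorem X_mul_mk_add_one_sub_eq_X_pow_mul_mk {R : Type*} [Semiring R] (f : ℤ → R)
    (hf : ∀ d < 0, f d = 0) {k : ℕ} (hk : 1 ≤ k) :
    X * PowerSeries.mk (fun m : ℕ => f (m + 1 - k)) = X ^ k * PowerSeries.mk (fun n : ℕ => f n) := by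
  ext (_ | m)
  · simp [coeff_X_pow_mul']
    omega
  · rw [coeff_succ_X_mul, coeff_X_pow_mul', coeff_mk]
    split_ifs with h
    · rw [coeff_mk]; congr 1; omega
    · exact hf _ (by omega)

section HSym

variable {N : ℕ} (x : Fin N → ℝ)

theorem hSubset_natCast (s : Finset (Fin N)) (n : ℕ) :
    hSubset x s n = completeHomogeneous x s n := by
  simp [hSubset, completeHomogeneous]

theorem hSym_of_neg (k : ℕ) {d : ℤ} (hd : d < 0) : hSym x k d = 0 :=
  sum_eq_zero fun _ _ => dif_neg hd.not_ge

theorem mk_hSym (k : ℕ) :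
    PowerSeries.mk (fun n : ℕ => hSym x k n) =
      ∑ t ∈ univ.powersetCard k, ∏ i ∈ t, (1 - C (x i) * X)⁻¹ := by
  ext n
  simp [hSym, hSubset_natCast, prod_inv_one_sub_C_mul_X, map_sum]

theorem mk_hSym_zero : PowerSeries.mk (fun n : ℕ => hSym x 0 n) = 1 := by
  simp [mk_hSym]

theorem prod_one_sub_C_add_mul_X_mul_inv_eq_sum_hSym (θ : ℝ) :
    ∏ i, (1 - C (x i + θ) * X) * (1 - C (x i) * X)⁻¹ =
      ∑ k ∈ range (N + 1), (-(C θ * X)) ^ k * PowerSeries.mk (fun n : ℕ => hSym x k n) := by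
  rw [prod_one_sub_C_add_mul_X_mul_inv, sum_powerset, card_univ, Fintype.card_fin]
  refine sum_congr rfl fun k _ => ?_
  rw [mk_hSym, mul_sum]
  exact sum_congr rfl fun t ht => by rw [(mem_powersetCard.1 ht).2]

end HSym

theorem eigenvalue_generating_function_general (N : ℕ) (θ : ℝ)
    (ℓ : Fin N → ℝ)
    (eig : ℕ → ℝ)
    (heig : ∀ m, eig m = ∑ k ∈ Finset.Icc 1 N, (-θ) ^ (k - 1) * hSym ℓ k ((m : ℤ) + 1 - (k : ℤ))) :
    1 - PowerSeries.C θ * PowerSeries.X * PowerSeries.mk (fun m => eig m)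
      = ∏ i : Fin N,
          ((1 - PowerSeries.C (ℓ i + θ) * PowerSeries.X) *
            (1 - PowerSeries.C (ℓ i) * PowerSeries.X)⁻¹) := by
  have eig_series : PowerSeries.mk (fun m => eig m) = ∑ k ∈ Icc 1 N,
      C ((-θ) ^ (k - 1)) * PowerSeries.mk (fun m : ℕ => hSym ℓ k (m + 1 - k)) := by
    ext m
    simp only [heig, coeff_mk, map_sum, coeff_C_mul]
  have range_eq : range (N + 1) = insert 0 (Icc 1 N) := by
    ext k; simp; omega
  rw [prod_one_sub_C_add_mul_X_mul_inv_eq_sum_hSym, range_eq, sum_insert (by simp), pow_zero,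
    one_mul, mk_hSym_zero, eig_series, mul_sum, sub_eq_add_neg, ← sum_neg_distrib]
  refine congrArg _ (sum_congr rfl fun k hk => ?_)
  obtain ⟨j, rfl⟩ : ∃ j, k = j + 1 := ⟨k - 1, by grind⟩
  calc _ = C ((-θ) ^ (j + 1)) *
          (X * PowerSeries.mk fun m : ℕ => hSym ℓ (j + 1) (m + 1 - (j + 1 : ℕ))) := by
        simp only [Nat.add_sub_cancel, pow_succ, map_mul, map_neg]; ring
    _ = C ((-θ) ^ (j + 1)) * X ^ (j + 1) * PowerSeries.mk (fun n : ℕ => hSym ℓ (j + 1) n) := by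
        rw [X_mul_mk_add_one_sub_eq_X_pow_mul_mk _ (fun d hd => hSym_of_neg ℓ _ hd) (by omega),
          mul_assoc]
    _ = (-(C θ * X)) ^ (j + 1) * PowerSeries.mk (fun n : ℕ => hSym ℓ (j + 1) n) := by
        rw [← neg_mul, ← map_neg, mul_pow, ← map_pow]

/-- Generating function of the eigenvalues of Heckman–Polychronakos operators on Jack
polynomials: with `ℓ_i = λ_i + θ(N-i)` and
`eig_m(λ) = ∑_{k=1}^N (-θ)^{k-1} h^{(k)}_{m+1-k}(ℓ)`, one has
`1 - θz ∑_m eig_m z^m = ∏_i (1-(ℓ_i+θ)z)/(1-ℓ_i z)` in `ℝ[[z]]`. -/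
theorem eigenvalue_generating_function (N : ℕ) (hN : 0 < N) (θ : ℝ)
    (lam : Fin N → ℕ) (hlam : Antitone lam)
    (ℓ : Fin N → ℝ) (hℓ : ∀ i, ℓ i = (lam i : ℝ) + θ * ((N : ℝ) - 1 - (i : ℕ)))
    (eig : ℕ → ℝ)
    (heig : ∀ m, eig m = ∑ k ∈ Finset.Icc 1 N, (-θ) ^ (k - 1) * hSym ℓ k ((m : ℤ) + 1 - (k : ℤ))) :
    1 - PowerSeries.C θ * PowerSeries.X * PowerSeries.mk (fun m => eig m)
      = ∏ i : Fin N,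
          ((1 - PowerSeries.C (ℓ i + θ) * PowerSeries.X) *
            (1 - PowerSeries.C (ℓ i) * PowerSeries.X)⁻¹) :=
  eigenvalue_generating_function_general N θ ℓ eig heig
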